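/- If y ∉ C is white with respect to C (y has no neighbor in C), then m(C ∪ {y}) ≤ m(C) − 1, q(C ∪ {y}) ≤ q(C) − 1 and p̂(C ∪ {y}) ≤ p̂(C) + 1; consequently f(C ∪ {y}) ≤ f(C). -/

import Mathlib

/-!
A white vertex `y` is counted by `m(C)` and stops being counted once it joins `C`, while enlarging
`C` never creates new vertices with at most one neighbour in it. In `G⟨C⟩` the vertex `y` is
isolated, whereas in `G⟨C ∪ {y}⟩` it is joined to one of its neighbours (which exist because `G`
is biconnected), so two components merge. Finally, adding a single vertex to an induced subgraph
creates at most one new component; this bounds `p(C ∪ {y} ∖ {x})` by `p(C ∖ {x}) + 1` for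
`x ∈ C`, and for `x = y` gives `p(C) ≤ p(C ∖ {x₀}) + 1` for any `x₀ ∈ C`.
-/

open SimpleGraph

variable {V : Type*} [Fintype V] [DecidableEq V]

/-- `pG G C` : number of connected components of the induced subgraph `G[C]`. -/
noncomputable def pG (G : SimpleGraph V) (C : Set V) : ℕ :=
  Nat.card (G.induce C).ConnectedComponent

/-- `spanG G C` : the spanning subgraph `G⟨C⟩` of `G`, with vertex set `V` and
edge set consisting of those edges of `G` with at least one endpoint in `C`. -/
def spanG (G : SimpleGraph V) (C : Set V) : SimpleGraph V where
  Adj u v := G.Adj u v ∧ (u ∈ C ∨ v ∈ C)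
  symm := ⟨fun u v h => ⟨h.1.symm, h.2.symm⟩⟩
  loopless := ⟨fun v h => G.loopless.irrefl v h.1⟩

/-- `qG G C` : number of connected components of `G⟨C⟩`. -/
noncomputable def qG (G : SimpleGraph V) (C : Set V) : ℕ :=
  Nat.card (spanG G C).ConnectedComponent

/-- number of neighbors of `v` lying in `C`. -/
noncomputable def nbrsIn (G : SimpleGraph V) (C : Set V) (v : V) : ℕ :=
  {u | u ∈ C ∧ G.Adj v u}.ncard

/-- `mG G C` : number of vertices outside `C` having at most one neighbor in `C`. -/
noncomputable def mG (G : SimpleGraph V) (C : Set V) : ℕ :=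
  {v | v ∉ C ∧ nbrsIn G C v ≤ 1}.ncard

/-- `phat G C = max_{x ∈ C} pG G (C \ {x})`, with `phat G ∅ = 0`. -/
noncomputable def phat (G : SimpleGraph V) (C : Set V) : ℕ :=
  sSup ((fun x => pG G (C \ {x})) '' C)

/-- the potential function `f(C) = p̂(C) + q(C) + m(C)`. -/
noncomputable def fG (G : SimpleGraph V) (C : Set V) : ℕ :=
  phat G C + qG G C + mG G C

/-- `G` is biconnected: `|V| ≥ 3` and deleting any single vertex leaves `G` connected. -/
def Biconnected (G : SimpleGraph V) : Prop :=
  3 ≤ Fintype.card V ∧ ∀ v : V, (G.induce {v}ᶜ).Connected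

theorem Nat.card_le_card_add_one_of_forall_ne_mem_range {α β : Type*} [Finite α] (f : α → β)
    (b₀ : β) (h : ∀ b, b ≠ b₀ → b ∈ Set.range f) : Nat.card β ≤ Nat.card α + 1 := by
  have hcover : Set.univ ⊆ insert b₀ (Set.range f) := fun b _ => by
    rcases eq_or_ne b b₀ with rfl | hb
    · exact Set.mem_insert b _
    · exact Set.mem_insert_of_mem _ (h b hb)
  calc Nat.card β = (Set.univ : Set β).ncard := (Set.ncard_univ β).symm
    _ ≤ (insert b₀ (Set.range f)).ncard := Set.ncard_le_ncard hcover
    _ ≤ (Set.range f).ncard + 1 := Set.ncard_insert_le _ _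
    _ ≤ Nat.card α + 1 := by
      rw [← Set.image_univ, ← Set.ncard_univ α]
      exact Nat.add_le_add_right (Set.ncard_image_le (Set.toFinite _)) 1

theorem SimpleGraph.ConnectedComponent.card_lt_card_of_le_of_adj {W : Type*} [Finite W]
    {G G' : SimpleGraph W} (h : G ≤ G') {u v : W} (hadj : G'.Adj u v) (huv : ¬G.Reachable u v) :
    Nat.card G'.ConnectedComponent < Nat.card G.ConnectedComponent := by
  refine (card_le_card_of_le h).lt_of_ne fun hcard => huv ?_
  have hinj : Function.Injective (map (Hom.ofLE h)) :=
    ((Nat.bijective_iff_surjective_and_card _).mpr ⟨surjective_map_ofLE h, hcard.symm⟩).injective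
  exact ConnectedComponent.exact (hinj (by simpa using ConnectedComponent.sound hadj.reachable))

theorem Biconnected.exists_adj {W : Type*} [Fintype W] {G : SimpleGraph W} (hG : Biconnected G)
    (v : W) : ∃ w, G.Adj v w := by
  obtain ⟨u, huv⟩ := Fintype.exists_ne_of_one_lt_card (by have := hG.1; omega) v
  have : Nontrivial ↥({u}ᶜ : Set W) := by
    rw [Set.nontrivial_coe_sort, ← Set.one_lt_ncard_iff_nontrivial, Set.ncard_compl,
      Set.ncard_singleton, Nat.card_eq_fintype_card]
    have := hG.1
    omega
  obtain ⟨w, hw⟩ := (hG.2 u).preconnected.exists_adj_of_nontrivial ⟨v, huv.symm⟩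
  exact ⟨w, hw⟩

section

variable {W : Type*} (G : SimpleGraph W)

theorem spanG_mono {C D : Set W} (h : C ⊆ D) : spanG G C ≤ spanG G D :=
  fun _ _ huv => ⟨huv.1, huv.2.imp (@h _) (@h _)⟩

theorem neighborSet_spanG_eq_empty {C : Set W} {v : W} (hv : v ∉ C)
    (hvC : ∀ u ∈ C, ¬G.Adj v u) : (spanG G C).neighborSet v = ∅ :=
  Set.eq_empty_of_forall_notMem fun u huv => huv.2.elim hv (hvC u · huv.1)

variable [Finite W]

theorem nbrsIn_eq_zero_iff {C : Set W} {v : W} : nbrsIn G C v = 0 ↔ ∀ u ∈ C, ¬G.Adj v u := by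
  rw [nbrsIn, Set.ncard_eq_zero]
  simp [Set.eq_empty_iff_forall_notMem]

theorem nbrsIn_mono {C D : Set W} (h : C ⊆ D) (v : W) : nbrsIn G C v ≤ nbrsIn G D v :=
  Set.ncard_le_ncard fun _ hu => ⟨h hu.1, hu.2⟩

theorem mG_insert_lt {C : Set W} {y : W} (hy : y ∉ C) (hyC : nbrsIn G C y ≤ 1) :
    mG G (insert y C) < mG G C := by
  have hsub : {v | v ∉ insert y C ∧ nbrsIn G (insert y C) v ≤ 1} ⊆
      {v | v ∉ C ∧ nbrsIn G C v ≤ 1} \ {y} := by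
    rintro v ⟨hv, hnbrs⟩
    rw [Set.mem_insert_iff, not_or] at hv
    exact ⟨⟨hv.2, (nbrsIn_mono G (Set.subset_insert y C) v).trans hnbrs⟩, hv.1⟩
  exact (Set.ncard_le_ncard hsub).trans_lt (Set.ncard_sdiff_singleton_lt_of_mem ⟨hy, hyC⟩)

theorem qG_insert_lt {C : Set W} {y z : W} (hy : y ∉ C) (hyC : ∀ u ∈ C, ¬G.Adj y u)
    (hyz : G.Adj y z) : qG G (insert y C) < qG G C :=
  ConnectedComponent.card_lt_card_of_le_of_adj (spanG_mono G (Set.subset_insert y C))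
    (u := y) (v := z) ⟨hyz, Or.inl (Set.mem_insert y C)⟩
    (not_reachable_of_neighborSet_left_eq_empty hyz.ne (neighborSet_spanG_eq_empty G hy hyC))

theorem pG_insert_le (S : Set W) (z : W) : pG G (insert z S) ≤ pG G S + 1 := by
  refine Nat.card_le_card_add_one_of_forall_ne_mem_range
    (ConnectedComponent.map (G.induceHomOfLE (Set.subset_insert z S)).toHom)
    ((G.induce (insert z S)).connectedComponentMk ⟨z, Set.mem_insert z S⟩) fun c hc => ?_
  induction c using ConnectedComponent.ind with
  | h v =>
    obtain ⟨v, hv | hv⟩ := v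
    · exact absurd (by subst hv; rfl) hc
    · exact ⟨(G.induce S).connectedComponentMk ⟨v, hv⟩, rfl⟩

theorem pG_diff_singleton_le_phat {C : Set W} {x : W} (hx : x ∈ C) :
    pG G (C \ {x}) ≤ phat G C :=
  le_csSup (C.toFinite.image _).bddAbove ⟨x, hx, rfl⟩

theorem pG_le_phat_add_one (C : Set W) : pG G C ≤ phat G C + 1 := by
  rcases C.eq_empty_or_nonempty with rfl | ⟨x, hx⟩
  · have : IsEmpty (G.induce (∅ : Set W)).ConnectedComponent :=
      ⟨fun c => c.ind fun v => v.2.elim⟩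
    simp [pG]
  · calc pG G C = pG G (insert x (C \ {x})) := by
          rw [Set.insert_sdiff_singleton, Set.insert_eq_of_mem hx]
      _ ≤ pG G (C \ {x}) + 1 := pG_insert_le G _ x
      _ ≤ phat G C + 1 := Nat.add_le_add_right (pG_diff_singleton_le_phat G hx) 1

theorem phat_insert_le (C : Set W) (y : W) : phat G (insert y C) ≤ phat G C + 1 := by
  by_cases hy : y ∈ C
  · rw [Set.insert_eq_of_mem hy]
    exact Nat.le_succ _
  refine csSup_le ⟨_, y, Set.mem_insert y C, rfl⟩ ?_
  rintro _ ⟨x, rfl | hx, rfl⟩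
  · simpa [hy] using pG_le_phat_add_one G C
  · have hxy : y ≠ x := fun h => hy (h ▸ hx)
    calc pG G (insert y C \ {x}) = pG G (insert y (C \ {x})) := by
          rw [Set.insert_sdiff_singleton_comm hxy]
      _ ≤ pG G (C \ {x}) + 1 := pG_insert_le G _ y
      _ ≤ phat G C + 1 := Nat.add_le_add_right (pG_diff_singleton_le_phat G hx) 1

end

/-- if `y ∉ C` is white w.r.t. `C` (no neighbor in `C`), then
`m(C∪{y}) ≤ m(C) - 1`, `q(C∪{y}) ≤ q(C) - 1`, `p̂(C∪{y}) ≤ p̂(C) + 1`, and hence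
`f(C∪{y}) ≤ f(C)`. -/
theorem stmt3 (G : SimpleGraph V) (hG : Biconnected G) (C : Set V) (y : V)
    (hy : y ∉ C) (hwhite : nbrsIn G C y = 0) :
    (mG G (C ∪ {y}) : ℤ) ≤ (mG G C : ℤ) - 1 ∧ (qG G (C ∪ {y}) : ℤ) ≤ (qG G C : ℤ) - 1 ∧
      phat G (C ∪ {y}) ≤ phat G C + 1 ∧ fG G (C ∪ {y}) ≤ fG G C := by
  obtain ⟨z, hyz⟩ := hG.exists_adj y
  have hm := mG_insert_lt G hy (hwhite.trans_le zero_le_one)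
  have hq := qG_insert_lt G hy ((nbrsIn_eq_zero_iff G).1 hwhite) hyz
  have hp := phat_insert_le G C y
  rw [Set.union_singleton, fG, fG]
  omega
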